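/- In BS(1,m) with m ≥ 2 and r ≥ 1, the elements a^(mʳ) and a are conjugate, and every element g with g⁻¹ a^(mʳ) g = a satisfies g = bʳ up to the description g = b⁻ʲaˡbᵏ with k − j = r; in particular the shortest conjugator has word length r. -/

import Mathlib

/-- The relator of the solvable Baumslag–Solitar group `BS(1,m)`:
`b a b⁻¹ a⁻ᵐ`, in the free group on two generators (`0 ↦ a`, `1 ↦ b`). -/
def BSrel (m : ℕ) : Set (FreeGroup (Fin 2)) :=
  {FreeGroup.of 1 * FreeGroup.of 0 * (FreeGroup.of 1)⁻¹ * (FreeGroup.of 0 ^ m)⁻¹}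

/-- The Baumslag–Solitar group `BS(1,m) = ⟨a, b ∣ b a b⁻¹ = aᵐ⟩`. -/
abbrev BS (m : ℕ) := PresentedGroup (BSrel m)

/-- The generator `a` of `BS(1,m)`. -/
def aBS (m : ℕ) : BS m := PresentedGroup.of 0

/-- The generator `b` of `BS(1,m)`. -/
def bBS (m : ℕ) : BS m := PresentedGroup.of 1

/-- The generating set `{a, b}` of `BS(1,m)`. -/
def genBS (m : ℕ) : Set (BS m) := {aBS m, bBS m}

/-- Word length of `g` with respect to a generating set `S`. -/
noncomputable def wordLength {G : Type*} [Group G] (S : Set G) (g : G) : ℕ :=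
  sInf {n | ∃ l : List G, (∀ x ∈ l, x ∈ S ∨ x⁻¹ ∈ S) ∧ l.prod = g ∧ l.length = n}

/-!
`BS(1,m)` acts on `ℚ` by `a : x ↦ x + 1` and `b : x ↦ m x`, and every element `g` acts by an
affine map of slope `m ^ β(g)`, where `β(g)` is the exponent sum of `b` in any word for `g`.
If `g⁻¹ a^(mʳ) g = a`, comparing the translation parts of `a^(mʳ) g = g a` gives `m ^ β(g) = mʳ`,
so `β(g) = r`. Since `β` changes by at most one per letter, every such conjugator has word length
at least `r`, and `bʳ` attains it.
-/

theorem Equiv.addLeft_pow_apply {A : Type*} [AddGroup A] (c : A) (n : ℕ) (x : A) :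
    (Equiv.addLeft c ^ n) x = n • c + x := by
  induction n with
  | zero => simp
  | succ n ih => rw [pow_succ', Equiv.Perm.mul_apply, ih, Equiv.coe_addLeft, succ_nsmul',
      add_assoc]

def Equiv.Perm.HasSlope {K : Type*} [Ring K] (f : Equiv.Perm K) (c : K) : Prop :=
  ∀ x s, f (x + s) = f x + c * s

namespace Equiv.Perm.HasSlope

section Ring

variable {K : Type*} [Ring K] {f g : Equiv.Perm K} {c d : K}

theorem one : (1 : Equiv.Perm K).HasSlope 1 := fun x s => by simp

theorem mul (hf : f.HasSlope c) (hg : g.HasSlope d) : (f * g).HasSlope (c * d) := fun x s => by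
  simp only [Equiv.Perm.mul_apply, hg x s, hf (g x) (d * s), mul_assoc]

end Ring

theorem inv {K : Type*} [DivisionRing K] {f : Equiv.Perm K} {c : K} (hf : f.HasSlope c)
    (hc : c ≠ 0) : f⁻¹.HasSlope c⁻¹ := fun x s => by
  rw [Equiv.Perm.inv_def, Equiv.symm_apply_eq, hf, Equiv.apply_symm_apply,
    mul_inv_cancel_left₀ hc]

end Equiv.Perm.HasSlope

section WordLength

variable {G : Type*} [Group G] {S : Set G}

theorem exists_list_length_eq_wordLength (hS : Subgroup.closure S = ⊤) (g : G) :
    ∃ l : List G, (∀ x ∈ l, x ∈ S ∨ x⁻¹ ∈ S) ∧ l.prod = g ∧ l.length = wordLength S g := by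
  have hg : g ∈ (Subgroup.closure S).toSubmonoid := by simp [hS]
  rw [Subgroup.closure_toSubmonoid] at hg
  obtain ⟨l, hl, hprod⟩ := Submonoid.exists_list_of_mem_closure hg
  exact Nat.sInf_mem
    (s := {n | ∃ l : List G, (∀ x ∈ l, x ∈ S ∨ x⁻¹ ∈ S) ∧ l.prod = g ∧ l.length = n})
    ⟨l.length, l, fun x hx => (hl x hx).imp id Set.mem_inv.mp, hprod, rfl⟩

theorem wordLength_pow_le {s : G} (hs : s ∈ S) (n : ℕ) : wordLength S (s ^ n) ≤ n := by
  unfold wordLength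
  exact Nat.sInf_le ⟨List.replicate n s, fun _ hx => .inl (List.eq_of_mem_replicate hx ▸ hs),
    List.prod_replicate n s, List.length_replicate⟩

theorem abs_toAdd_list_prod_le_length (χ : G →* Multiplicative ℤ) {l : List G}
    (hl : ∀ x ∈ l, |(χ x).toAdd| ≤ 1) : |(χ l.prod).toAdd| ≤ l.length := by
  induction l with
  | nil => simp
  | cons x t ih =>
    rw [List.prod_cons, map_mul, toAdd_mul, List.length_cons, Nat.cast_succ, add_comm _ 1]
    exact (abs_add_le _ _).trans (add_le_add (hl x List.mem_cons_self)
      (ih fun y hy => hl y (List.mem_cons_of_mem x hy)))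

theorem abs_toAdd_le_wordLength (hS : Subgroup.closure S = ⊤) (χ : G →* Multiplicative ℤ)
    (hχ : ∀ s ∈ S, |(χ s).toAdd| ≤ 1) (g : G) : |(χ g).toAdd| ≤ wordLength S g := by
  obtain ⟨l, hl, rfl, hlen⟩ := exists_list_length_eq_wordLength hS g
  rw [← hlen]
  refine abs_toAdd_list_prod_le_length χ fun x hx => ?_
  rcases hl x hx with h | h
  · exact hχ x h
  · simpa using hχ x⁻¹ h

end WordLength

namespace BS

variable {m : ℕ}

theorem bBS_mul_aBS_mul_inv : bBS m * aBS m * (bBS m)⁻¹ = aBS m ^ m := by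
  have h := PresentedGroup.one_of_mem (Set.mem_singleton
    (FreeGroup.of 1 * FreeGroup.of 0 * (FreeGroup.of 1)⁻¹ * (FreeGroup.of (0 : Fin 2) ^ m)⁻¹))
  simp only [map_mul, map_inv, map_pow, mul_inv_eq_one] at h
  exact h

theorem bBS_pow_mul_aBS_mul_inv (n : ℕ) :
    bBS m ^ n * aBS m * (bBS m ^ n)⁻¹ = aBS m ^ (m ^ n) := by
  induction n with
  | zero => simp
  | succ n ih =>
    calc bBS m ^ (n + 1) * aBS m * (bBS m ^ (n + 1))⁻¹
        = bBS m * (bBS m ^ n * aBS m * (bBS m ^ n)⁻¹) * (bBS m)⁻¹ := by group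
      _ = (bBS m * aBS m * (bBS m)⁻¹) ^ (m ^ n) := by rw [ih, conj_pow]
      _ = aBS m ^ (m ^ (n + 1)) := by rw [bBS_mul_aBS_mul_inv, ← pow_mul, pow_succ']

theorem inv_bBS_pow_mul_aBS_pow_mul (r : ℕ) :
    (bBS m ^ r)⁻¹ * aBS m ^ (m ^ r) * bBS m ^ r = aBS m := by
  rw [← bBS_pow_mul_aBS_mul_inv r]
  group

theorem closure_genBS : Subgroup.closure (genBS m) = ⊤ := by
  rw [← PresentedGroup.closure_range_of (BSrel m)]
  congr 1
  ext g
  simp [genBS, aBS, bBS, Fin.exists_fin_two, eq_comm]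

variable (m) in
def bExp : BS m →* Multiplicative ℤ :=
  PresentedGroup.toGroup (f := ![1, Multiplicative.ofAdd 1]) (by simp [BSrel])

@[simp] theorem bExp_aBS : bExp m (aBS m) = 1 := PresentedGroup.toGroup.of _

@[simp] theorem bExp_bBS : bExp m (bBS m) = Multiplicative.ofAdd 1 := PresentedGroup.toGroup.of _

theorem abs_bExp_le_wordLength (g : BS m) : |(bExp m g).toAdd| ≤ wordLength (genBS m) g :=
  abs_toAdd_le_wordLength closure_genBS (bExp m) (by simp [genBS]) g

variable (m) in
def affineRep (hm : m ≠ 0) : BS m →* Equiv.Perm ℚ :=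
  PresentedGroup.toGroup
    (f := ![Equiv.addLeft 1, Equiv.mulLeft₀ (m : ℚ) (Nat.cast_ne_zero.mpr hm)]) (by
    simp only [BSrel, Set.mem_singleton_iff, forall_eq, map_mul, map_inv, map_pow,
      FreeGroup.lift_apply_of, mul_inv_eq_one]
    ext x
    simp [mul_add, Nat.cast_ne_zero.mpr hm])

@[simp] theorem affineRep_aBS (hm : m ≠ 0) : affineRep m hm (aBS m) = Equiv.addLeft 1 :=
  PresentedGroup.toGroup.of _

@[simp] theorem affineRep_bBS (hm : m ≠ 0) :
    affineRep m hm (bBS m) = Equiv.mulLeft₀ (m : ℚ) (Nat.cast_ne_zero.mpr hm) :=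
  PresentedGroup.toGroup.of _

theorem affineRep_hasSlope (hm : m ≠ 0) (g : BS m) :
    (affineRep m hm g).HasSlope ((m : ℚ) ^ (bExp m g).toAdd) := by
  have hmQ : (m : ℚ) ≠ 0 := Nat.cast_ne_zero.mpr hm
  let H : Subgroup (BS m) :=
    { carrier := {g | (affineRep m hm g).HasSlope ((m : ℚ) ^ (bExp m g).toAdd)}
      one_mem' := by simpa using Equiv.Perm.HasSlope.one
      mul_mem' := fun {g h} hg hh => by
        simpa [zpow_add₀ hmQ] using hg.mul hh
      inv_mem' := fun {g} hg => by
        simpa using hg.inv (zpow_ne_zero _ hmQ) }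
  refine PresentedGroup.generated_by _ H (fun i => ?_) g
  fin_cases i
  · change aBS m ∈ H
    intro x s
    simp only [affineRep_aBS, bExp_aBS, Equiv.coe_addLeft, toAdd_one, zpow_zero, one_mul]
    ring
  · change bBS m ∈ H
    intro x s
    simp [mul_add]

theorem zpow_bExp_eq_of_inv_mul_pow_mul_eq (hm : m ≠ 0) {g : BS m} {n : ℕ}
    (h : g⁻¹ * aBS m ^ n * g = aBS m) : (m : ℚ) ^ (bExp m g).toAdd = n := by
  have hcomm : aBS m ^ n * g = g * aBS m := by
    conv_rhs => rw [← h]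
    group
  have hat0 := congrArg (fun x => affineRep m hm x 0) hcomm
  simp only [map_mul, map_pow, Equiv.Perm.mul_apply, affineRep_aBS, Equiv.addLeft_pow_apply,
    Equiv.coe_addLeft, add_zero, nsmul_one] at hat0
  have hslope := affineRep_hasSlope hm g 0 1
  rw [zero_add, mul_one] at hslope
  linarith

theorem bExp_eq_of_inv_mul_pow_mul_eq (hm : 2 ≤ m) {g : BS m} {r : ℕ}
    (h : g⁻¹ * aBS m ^ (m ^ r) * g = aBS m) : (bExp m g).toAdd = r := by
  have hm1 : (1 : ℚ) < m := by exact_mod_cast hm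
  refine zpow_right_injective₀ (zero_lt_one.trans hm1) hm1.ne' ?_
  simpa using zpow_bExp_eq_of_inv_mul_pow_mul_eq (by omega) h

theorem le_wordLength_of_inv_mul_pow_mul_eq (hm : 2 ≤ m) {g : BS m} {r : ℕ}
    (h : g⁻¹ * aBS m ^ (m ^ r) * g = aBS m) : r ≤ wordLength (genBS m) g := by
  have := abs_bExp_le_wordLength g
  rw [bExp_eq_of_inv_mul_pow_mul_eq hm h, abs_of_nonneg (Nat.cast_nonneg r)] at this
  exact_mod_cast this

end BS

theorem stmt9_general (m r : ℕ) (hm : 2 ≤ m) :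
    ((bBS m ^ r)⁻¹ * aBS m ^ (m ^ r) * bBS m ^ r = aBS m) ∧
    (∀ (j k : ℕ) (l : ℤ),
      ((bBS m)⁻¹ ^ j * aBS m ^ l * bBS m ^ k)⁻¹ * aBS m ^ (m ^ r) *
          ((bBS m)⁻¹ ^ j * aBS m ^ l * bBS m ^ k) = aBS m →
        (k : ℤ) - (j : ℤ) = r) ∧
    sInf {c | ∃ g : BS m, g⁻¹ * aBS m ^ (m ^ r) * g = aBS m ∧
      wordLength (genBS m) g = c} = r := by
  have hconj := BS.inv_bBS_pow_mul_aBS_pow_mul (m := m) r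
  refine ⟨hconj, fun j k l h => ?_, IsLeast.csInf_eq ⟨⟨bBS m ^ r, hconj, ?_⟩, ?_⟩⟩
  · have := BS.bExp_eq_of_inv_mul_pow_mul_eq hm h
    simp only [map_mul, map_pow, map_inv, map_zpow, BS.bExp_aBS, BS.bExp_bBS, toAdd_mul,
      toAdd_pow, toAdd_inv, toAdd_zpow, toAdd_one, toAdd_ofAdd, smul_eq_mul, nsmul_eq_mul] at this
    omega
  · exact le_antisymm (wordLength_pow_le (show bBS m ∈ genBS m from .inr rfl) r)
      (BS.le_wordLength_of_inv_mul_pow_mul_eq hm hconj)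
  · rintro c ⟨g, hg, rfl⟩
    exact BS.le_wordLength_of_inv_mul_pow_mul_eq hm hg

/-- In `BS(1,m)` with `m ≥ 2` and `r ≥ 1`: `a^(mʳ)` is conjugate to `a`; every
conjugator written as `b⁻ʲ aˡ bᵏ` satisfies `k − j = r`; and the shortest
conjugator has word length `r` (namely `bʳ`). -/
theorem stmt9 (m r : ℕ) (hm : 2 ≤ m) (hr : 1 ≤ r) :
    ((bBS m ^ r)⁻¹ * aBS m ^ (m ^ r) * bBS m ^ r = aBS m) ∧
    (∀ (j k : ℕ) (l : ℤ),
      ((bBS m)⁻¹ ^ j * aBS m ^ l * bBS m ^ k)⁻¹ * aBS m ^ (m ^ r) *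
          ((bBS m)⁻¹ ^ j * aBS m ^ l * bBS m ^ k) = aBS m →
        (k : ℤ) - (j : ℤ) = r) ∧
    sInf {c | ∃ g : BS m, g⁻¹ * aBS m ^ (m ^ r) * g = aBS m ∧
      wordLength (genBS m) g = c} = r :=
  stmt9_general m r hm
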